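/- Fix y₀ ∈ ℝ and let φ, ψ : ℝ → ℝ be of class C⁴ on an open neighborhood of y₀. For h > 0 let ⟨f⟩_h := (1/h) ∫_{y₀−h/2}^{y₀+h/2} f(y) dy denote the average of f over the interval of length h centered at y₀. Then ⟨φψ⟩_h = ⟨φ⟩_h · ⟨ψ⟩_h + (h²/12)·φ'(y₀)·ψ'(y₀) + O(h⁴) as h → 0⁺. -/

import Mathlib

open Set MeasureTheory intervalIntegral

/-- The average of `f` over the interval of length `h` centered at `y₀`. -/
noncomputable def faceAvg (f : ℝ → ℝ) (y₀ h : ℝ) : ℝ :=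
  (1 / h) * ∫ y in (y₀ - h / 2)..(y₀ + h / 2), f y

/-- MVT step: if `g y₀ = 0` and `|g'| ≤ C` on a convex set, then `|g| ≤ C * r`
where `r` bounds distances to `y₀`. -/
lemma mvt_step {s : Set ℝ} (hconv : Convex ℝ s) {y₀ : ℝ} (hy₀ : y₀ ∈ s)
    {g g' : ℝ → ℝ} (hd : ∀ x ∈ s, HasDerivWithinAt g (g' x) s x) (hg0 : g y₀ = 0)
    {C r : ℝ} (hb : ∀ x ∈ s, |g' x| ≤ C) (hr : ∀ x ∈ s, |x - y₀| ≤ r) :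
    ∀ x ∈ s, |g x| ≤ C * r := by
  intro x hx
  have hC : 0 ≤ C := le_trans (abs_nonneg _) (hb y₀ hy₀)
  have := hconv.norm_image_sub_le_of_norm_hasDerivWithin_le hd
    (fun x hx => by simpa using hb x hx) hy₀ hx
  simp only [Real.norm_eq_abs, hg0, sub_zero] at this
  exact this.trans (mul_le_mul_of_nonneg_left (hr x hx) hC)

set_option maxHeartbeats 1000000 in
/-- Fourth-order expansion of the face average of a single `C⁴` function. -/
lemma faceAvg_expansion (y₀ : ℝ) (f : ℝ → ℝ)
    (U : Set ℝ) (hU : IsOpen U) (hy : y₀ ∈ U) (hf : ContDiffOn ℝ 4 f U) :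
    ∃ C > 0, ∃ h₀ > 0, ∀ h : ℝ, 0 < h → h < h₀ →
      |faceAvg f y₀ h - f y₀ - h ^ 2 / 24 * deriv (deriv f) y₀| ≤ C * h ^ 4 := by
  obtain ⟨δ, hδpos, hball⟩ := Metric.isOpen_iff.mp hU y₀ hy
  set f₁ := deriv f with hf₁def
  set f₂ := deriv f₁ with hf₂def
  set f₃ := deriv f₂ with hf₃def
  set f₄ := deriv f₃ with hf₄def
  have hf₁ : ContDiffOn ℝ 3 f₁ U := hf.deriv_of_isOpen hU (by norm_num)
  have hf₂ : ContDiffOn ℝ 2 f₂ U := hf₁.deriv_of_isOpen hU (by norm_num)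
  have hf₃ : ContDiffOn ℝ 1 f₃ U := hf₂.deriv_of_isOpen hU (by norm_num)
  have hf₄c : ContinuousOn f₄ U := hf₃.continuousOn_deriv_of_isOpen hU le_rfl
  have hdf : ∀ x ∈ U, HasDerivAt f (f₁ x) x := fun x hx =>
    ((hf.contDiffAt (hU.mem_nhds hx)).differentiableAt (by norm_num)).hasDerivAt
  have hdf₁ : ∀ x ∈ U, HasDerivAt f₁ (f₂ x) x := fun x hx =>
    ((hf₁.contDiffAt (hU.mem_nhds hx)).differentiableAt (by norm_num)).hasDerivAt
  have hdf₂ : ∀ x ∈ U, HasDerivAt f₂ (f₃ x) x := fun x hx =>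
    ((hf₂.contDiffAt (hU.mem_nhds hx)).differentiableAt (by norm_num)).hasDerivAt
  have hdf₃ : ∀ x ∈ U, HasDerivAt f₃ (f₄ x) x := fun x hx =>
    ((hf₃.contDiffAt (hU.mem_nhds hx)).differentiableAt (by norm_num)).hasDerivAt
  -- compact neighborhood
  set K : Set ℝ := Icc (y₀ - δ / 2) (y₀ + δ / 2) with hKdef
  have hKU : K ⊆ U := by
    intro x hx
    apply hball
    simp only [Metric.mem_ball, Real.dist_eq]
    have := hx.1; have := hx.2
    rw [abs_lt]; constructor <;> linarith
  obtain ⟨M, hM⟩ := isCompact_Icc.exists_bound_of_continuousOn (hf₄c.mono hKU)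
  have hMnn : 0 ≤ M := le_trans (norm_nonneg _)
    (hM y₀ (by constructor <;> [linarith; linarith]))
  refine ⟨M / 16 + 1, by positivity, δ / 2, by positivity, fun h hh hhδ => ?_⟩
  have hab : y₀ - h / 2 ≤ y₀ + h / 2 := by linarith
  set s : Set ℝ := Icc (y₀ - h / 2) (y₀ + h / 2) with hsdef
  have hsK : s ⊆ K := fun x hx => ⟨by have := hx.1; simp only [hsdef, mem_Icc] at *; linarith,
    by have := hx.2; simp only [hsdef, mem_Icc] at *; linarith⟩
  have hsU : s ⊆ U := hsK.trans hKU
  have hconv : Convex ℝ s := convex_Icc _ _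
  have hy₀s : y₀ ∈ s := by simp only [hsdef, mem_Icc]; constructor <;> linarith
  have hr : ∀ x ∈ s, |x - y₀| ≤ h / 2 := by
    intro x hx
    simp only [hsdef, mem_Icc] at hx
    rw [abs_le]
    constructor <;> linarith
  -- iterated mean value theorem bounds on the Taylor remainder
  have hb4 : ∀ x ∈ s, |f₄ x| ≤ M := fun x hx => hM x (hsK hx)
  have b3 : ∀ x ∈ s, |f₃ x - f₃ y₀| ≤ M * (h / 2) := by
    refine mvt_step hconv hy₀s (g' := f₄) (fun x hx => ?_) (by simp) hb4 hr
    exact ((hdf₃ x (hsU hx)).sub_const _).hasDerivWithinAt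
  have b2 : ∀ x ∈ s, |f₂ x - f₂ y₀ - f₃ y₀ * (x - y₀)| ≤ M * (h / 2) * (h / 2) := by
    refine mvt_step hconv hy₀s (g' := fun x => f₃ x - f₃ y₀) (fun x hx => ?_) (by simp) b3 hr
    have h1 : HasDerivAt (fun x => f₃ y₀ * (x - y₀)) (f₃ y₀) x := by
      have := ((hasDerivAt_id x).sub_const y₀).const_mul (f₃ y₀)
      simp only [id_eq] at this
      exact this.congr_deriv (by ring)
    exact (((hdf₂ x (hsU hx)).sub_const _).sub h1).hasDerivWithinAt
  have b1 : ∀ x ∈ s, |f₁ x - f₁ y₀ - f₂ y₀ * (x - y₀) - f₃ y₀ * (x - y₀) ^ 2 / 2|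
      ≤ M * (h / 2) * (h / 2) * (h / 2) := by
    refine mvt_step hconv hy₀s (g' := fun x => f₂ x - f₂ y₀ - f₃ y₀ * (x - y₀))
      (fun x hx => ?_) (by simp) b2 hr
    have h1 : HasDerivAt (fun x => f₂ y₀ * (x - y₀)) (f₂ y₀) x := by
      have := ((hasDerivAt_id x).sub_const y₀).const_mul (f₂ y₀)
      simp only [id_eq] at this
      exact this.congr_deriv (by ring)
    have h2 : HasDerivAt (fun x => f₃ y₀ * (x - y₀) ^ 2 / 2) (f₃ y₀ * (x - y₀)) x := by
      have := ((((hasDerivAt_id x).sub_const y₀).pow 2).const_mul (f₃ y₀)).div_const 2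
      simp only [id_eq] at this
      exact this.congr_deriv (by ring)
    exact ((((hdf₁ x (hsU hx)).sub_const _).sub h1).sub h2).hasDerivWithinAt
  have b0 : ∀ x ∈ s, |f x - f y₀ - f₁ y₀ * (x - y₀) - f₂ y₀ * (x - y₀) ^ 2 / 2
      - f₃ y₀ * (x - y₀) ^ 3 / 6| ≤ M * (h / 2) * (h / 2) * (h / 2) * (h / 2) := by
    refine mvt_step hconv hy₀s
      (g' := fun x => f₁ x - f₁ y₀ - f₂ y₀ * (x - y₀) - f₃ y₀ * (x - y₀) ^ 2 / 2)
      (fun x hx => ?_) (by simp) b1 hr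
    have h1 : HasDerivAt (fun x => f₁ y₀ * (x - y₀)) (f₁ y₀) x := by
      have := ((hasDerivAt_id x).sub_const y₀).const_mul (f₁ y₀)
      simp only [id_eq] at this
      exact this.congr_deriv (by ring)
    have h2 : HasDerivAt (fun x => f₂ y₀ * (x - y₀) ^ 2 / 2) (f₂ y₀ * (x - y₀)) x := by
      have := ((((hasDerivAt_id x).sub_const y₀).pow 2).const_mul (f₂ y₀)).div_const 2
      simp only [id_eq] at this
      exact this.congr_deriv (by ring)
    have h3 : HasDerivAt (fun x => f₃ y₀ * (x - y₀) ^ 3 / 6) (f₃ y₀ * (x - y₀) ^ 2 / 2) x := by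
      have := ((((hasDerivAt_id x).sub_const y₀).pow 3).const_mul (f₃ y₀)).div_const 6
      simp only [id_eq] at this
      exact this.congr_deriv (by ring)
    exact (((((hdf x (hsU hx)).sub_const _).sub h1).sub h2).sub h3).hasDerivWithinAt
  -- integral computation
  have hfc : ContinuousOn f (uIcc (y₀ - h / 2) (y₀ + h / 2)) := by
    rw [uIcc_of_le hab]; exact hf.continuousOn.mono hsU
  have hintf : IntervalIntegrable f volume (y₀ - h / 2) (y₀ + h / 2) := hfc.intervalIntegrable
  have hPc : Continuous (fun x => f y₀ + f₁ y₀ * (x - y₀) + f₂ y₀ * (x - y₀) ^ 2 / 2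
      + f₃ y₀ * (x - y₀) ^ 3 / 6) := by
    apply Continuous.add
    apply Continuous.add
    apply Continuous.add continuous_const
    · exact continuous_const.mul (continuous_id.sub continuous_const)
    · exact (continuous_const.mul ((continuous_id.sub continuous_const).pow 2)).div_const 2
    · exact (continuous_const.mul ((continuous_id.sub continuous_const).pow 3)).div_const 6
  have hintP : IntervalIntegrable (fun x => f y₀ + f₁ y₀ * (x - y₀) + f₂ y₀ * (x - y₀) ^ 2 / 2
      + f₃ y₀ * (x - y₀) ^ 3 / 6) volume (y₀ - h / 2) (y₀ + h / 2) :=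
    hPc.intervalIntegrable _ _
  have hIP : (∫ x in (y₀ - h / 2)..(y₀ + h / 2), (f y₀ + f₁ y₀ * (x - y₀)
      + f₂ y₀ * (x - y₀) ^ 2 / 2 + f₃ y₀ * (x - y₀) ^ 3 / 6))
      = f y₀ * h + f₂ y₀ * h ^ 3 / 24 := by
    have hQ : ∀ x ∈ uIcc (y₀ - h / 2) (y₀ + h / 2),
        HasDerivAt (fun x => f y₀ * x + f₁ y₀ * (x - y₀) ^ 2 / 2 + f₂ y₀ * (x - y₀) ^ 3 / 6
          + f₃ y₀ * (x - y₀) ^ 4 / 24)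
        (f y₀ + f₁ y₀ * (x - y₀) + f₂ y₀ * (x - y₀) ^ 2 / 2 + f₃ y₀ * (x - y₀) ^ 3 / 6) x := by
      intro x _
      have q0 : HasDerivAt (fun x => f y₀ * x) (f y₀) x := by
        simpa using (hasDerivAt_id x).const_mul (f y₀)
      have q1 : HasDerivAt (fun x => f₁ y₀ * (x - y₀) ^ 2 / 2) (f₁ y₀ * (x - y₀)) x := by
        have := ((((hasDerivAt_id x).sub_const y₀).pow 2).const_mul (f₁ y₀)).div_const 2
        simp only [id_eq] at this
        exact this.congr_deriv (by ring)
      have q2 : HasDerivAt (fun x => f₂ y₀ * (x - y₀) ^ 3 / 6) (f₂ y₀ * (x - y₀) ^ 2 / 2) x := by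
        have := ((((hasDerivAt_id x).sub_const y₀).pow 3).const_mul (f₂ y₀)).div_const 6
        simp only [id_eq] at this
        exact this.congr_deriv (by ring)
      have q3 : HasDerivAt (fun x => f₃ y₀ * (x - y₀) ^ 4 / 24) (f₃ y₀ * (x - y₀) ^ 3 / 6) x := by
        have := ((((hasDerivAt_id x).sub_const y₀).pow 4).const_mul (f₃ y₀)).div_const 24
        simp only [id_eq] at this
        exact this.congr_deriv (by ring)
      exact ((q0.add q1).add q2).add q3
    rw [intervalIntegral.integral_eq_sub_of_hasDerivAt hQ hintP]
    ring
  have key : faceAvg f y₀ h - f y₀ - h ^ 2 / 24 * f₂ y₀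
      = (1 / h) * ∫ x in (y₀ - h / 2)..(y₀ + h / 2), (f x - (f y₀ + f₁ y₀ * (x - y₀)
        + f₂ y₀ * (x - y₀) ^ 2 / 2 + f₃ y₀ * (x - y₀) ^ 3 / 6)) := by
    rw [intervalIntegral.integral_sub hintf hintP, hIP]
    simp only [faceAvg]
    field_simp
    ring
  rw [key]
  have hbound : |∫ x in (y₀ - h / 2)..(y₀ + h / 2), (f x - (f y₀ + f₁ y₀ * (x - y₀)
      + f₂ y₀ * (x - y₀) ^ 2 / 2 + f₃ y₀ * (x - y₀) ^ 3 / 6))|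
      ≤ M * (h / 2) * (h / 2) * (h / 2) * (h / 2) * |y₀ + h / 2 - (y₀ - h / 2)| := by
    rw [← Real.norm_eq_abs]
    apply intervalIntegral.norm_integral_le_of_norm_le_const
    intro x hx
    have hxs : x ∈ s := by
      rw [uIoc_of_le hab] at hx
      exact Ioc_subset_Icc_self hx
    have := b0 x hxs
    rw [Real.norm_eq_abs]
    calc |f x - (f y₀ + f₁ y₀ * (x - y₀) + f₂ y₀ * (x - y₀) ^ 2 / 2 + f₃ y₀ * (x - y₀) ^ 3 / 6)|
        = |f x - f y₀ - f₁ y₀ * (x - y₀) - f₂ y₀ * (x - y₀) ^ 2 / 2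
          - f₃ y₀ * (x - y₀) ^ 3 / 6| := by ring_nf
      _ ≤ _ := this
  have habs : |y₀ + h / 2 - (y₀ - h / 2)| = h := by
    rw [abs_of_nonneg] <;> linarith
  rw [habs] at hbound
  rw [abs_mul, abs_of_nonneg (by positivity : (0:ℝ) ≤ 1 / h)]
  calc (1 / h) * |∫ x in (y₀ - h / 2)..(y₀ + h / 2), (f x - (f y₀ + f₁ y₀ * (x - y₀)
        + f₂ y₀ * (x - y₀) ^ 2 / 2 + f₃ y₀ * (x - y₀) ^ 3 / 6))|
      ≤ (1 / h) * (M * (h / 2) * (h / 2) * (h / 2) * (h / 2) * h) := by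
        apply mul_le_mul_of_nonneg_left hbound (by positivity)
    _ = M / 16 * h ^ 4 := by field_simp; ring
    _ ≤ (M / 16 + 1) * h ^ 4 := by nlinarith [pow_pos hh 4]

set_option maxHeartbeats 2000000 in
/-- Product rule for face averages:
`⟨φψ⟩ = ⟨φ⟩⟨ψ⟩ + (h²/12) φ'(y₀) ψ'(y₀) + O(h⁴)`. -/
theorem face_average_product_rule
    (y₀ : ℝ) (φ ψ : ℝ → ℝ)
    (U : Set ℝ) (hU : IsOpen U) (hy : y₀ ∈ U)
    (hφ : ContDiffOn ℝ 4 φ U) (hψ : ContDiffOn ℝ 4 ψ U) :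
    ∃ M > 0, ∃ h₀ > 0, ∀ h : ℝ, 0 < h → h < h₀ →
      |faceAvg (fun y => φ y * ψ y) y₀ h
        - (faceAvg φ y₀ h * faceAvg ψ y₀ h
          + (h ^ 2 / 12) * deriv φ y₀ * deriv ψ y₀)| ≤ M * h ^ 4 := by
  have hφψ : ContDiffOn ℝ 4 (fun y => φ y * ψ y) U := hφ.mul hψ
  obtain ⟨C₁, hC₁, h₁, hh₁, H₁⟩ := faceAvg_expansion y₀ φ U hU hy hφ
  obtain ⟨C₂, hC₂, h₂, hh₂, H₂⟩ := faceAvg_expansion y₀ ψ U hU hy hψ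
  obtain ⟨C₃, hC₃, h₃, hh₃, H₃⟩ := faceAvg_expansion y₀ (fun y => φ y * ψ y) U hU hy hφψ
  -- differentiability facts
  have hdφat : ∀ x ∈ U, DifferentiableAt ℝ φ x := fun x hx =>
    (hφ.contDiffAt (hU.mem_nhds hx)).differentiableAt (by norm_num)
  have hdψat : ∀ x ∈ U, DifferentiableAt ℝ ψ x := fun x hx =>
    (hψ.contDiffAt (hU.mem_nhds hx)).differentiableAt (by norm_num)
  have hφ' : ContDiffOn ℝ 3 (deriv φ) U := hφ.deriv_of_isOpen hU (by norm_num)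
  have hψ' : ContDiffOn ℝ 3 (deriv ψ) U := hψ.deriv_of_isOpen hU (by norm_num)
  have hdφ'y : DifferentiableAt ℝ (deriv φ) y₀ :=
    (hφ'.contDiffAt (hU.mem_nhds hy)).differentiableAt (by norm_num)
  have hdψ'y : DifferentiableAt ℝ (deriv ψ) y₀ :=
    (hψ'.contDiffAt (hU.mem_nhds hy)).differentiableAt (by norm_num)
  have hdφy := hdφat y₀ hy
  have hdψy := hdψat y₀ hy
  -- second derivative of product
  have hev : (deriv fun y => φ y * ψ y) =ᶠ[nhds y₀]
      fun x => deriv φ x * ψ x + φ x * deriv ψ x :=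
    Filter.eventuallyEq_of_mem (hU.mem_nhds hy) fun x hx =>
      deriv_mul (hdφat x hx) (hdψat x hx)
  have hp2 : deriv (deriv fun y => φ y * ψ y) y₀
      = deriv (deriv φ) y₀ * ψ y₀ + 2 * (deriv φ y₀ * deriv ψ y₀)
        + φ y₀ * deriv (deriv ψ) y₀ := by
    rw [hev.deriv_eq, deriv_fun_add (f := fun x => deriv φ x * ψ x) (g := fun x => φ x * deriv ψ x) (hdφ'y.mul hdψy) (hdφy.mul hdψ'y),
      deriv_fun_mul hdφ'y hdψy, deriv_fun_mul hdφy hdψ'y]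
    ring
  set a0 := φ y₀ with ha0
  set b0 := ψ y₀ with hb0
  set a1 := deriv φ y₀ with ha1
  set b1 := deriv ψ y₀ with hb1
  set a2 := deriv (deriv φ) y₀ with ha2
  set b2 := deriv (deriv ψ) y₀ with hb2
  refine ⟨C₃ + |a0| * C₂ + |a2| * C₂ + C₁ * (|b0| + |b2| / 24 + C₂) + |a2 * b2| + 1,
    by positivity, min (min h₁ h₂) (min h₃ 1), by positivity, fun h hh hlt => ?_⟩
  simp only [lt_min_iff] at hlt
  obtain ⟨⟨hlt₁, hlt₂⟩, hlt₃, hlt1⟩ := hlt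
  have hh2 : h ^ 2 ≤ 1 := by nlinarith
  have hh4 : h ^ 4 ≤ 1 := by nlinarith
  have h4pos : 0 < h ^ 4 := by positivity
  set A := faceAvg φ y₀ h with hA
  set B := faceAvg ψ y₀ h with hB
  set P := faceAvg (fun y => φ y * ψ y) y₀ h with hP
  have heφ : |A - a0 - h ^ 2 / 24 * a2| ≤ C₁ * h ^ 4 := H₁ h hh hlt₁
  have heψ : |B - b0 - h ^ 2 / 24 * b2| ≤ C₂ * h ^ 4 := H₂ h hh hlt₂
  have heπ : |P - a0 * b0 - h ^ 2 / 24 * (a2 * b0 + 2 * (a1 * b1) + a0 * b2)|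
      ≤ C₃ * h ^ 4 := by
    have := H₃ h hh hlt₃
    rw [hp2] at this
    simpa using this
  -- algebraic identity
  have hid : P - (A * B + h ^ 2 / 12 * a1 * b1)
      = (P - a0 * b0 - h ^ 2 / 24 * (a2 * b0 + 2 * (a1 * b1) + a0 * b2))
        - a0 * (B - b0 - h ^ 2 / 24 * b2)
        - h ^ 2 / 24 * a2 * (B - b0 - h ^ 2 / 24 * b2)
        - (A - a0 - h ^ 2 / 24 * a2) * B
        - h ^ 4 / 576 * (a2 * b2) := by ring
  rw [hid]
  -- bound each term
  have tB : |B| ≤ |b0| + |b2| / 24 + C₂ := by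
    calc |B| = |(b0 + h ^ 2 / 24 * b2) + (B - b0 - h ^ 2 / 24 * b2)| := by congr 1; ring
      _ ≤ |b0 + h ^ 2 / 24 * b2| + |B - b0 - h ^ 2 / 24 * b2| := abs_add_le _ _
      _ ≤ (|b0| + |b2| / 24) + C₂ := by
          apply add_le_add
          · calc |b0 + h ^ 2 / 24 * b2| ≤ |b0| + |h ^ 2 / 24 * b2| := abs_add_le _ _
              _ ≤ |b0| + |b2| / 24 := by
                  rw [abs_mul, abs_of_nonneg (by positivity : (0:ℝ) ≤ h ^ 2 / 24)]
                  nlinarith [abs_nonneg b2]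
          · exact heψ.trans (by nlinarith)
  have hT2 : |a0 * (B - b0 - h ^ 2 / 24 * b2)| ≤ |a0| * (C₂ * h ^ 4) := by
    rw [abs_mul]; exact mul_le_mul_of_nonneg_left heψ (abs_nonneg _)
  have hT3 : |h ^ 2 / 24 * a2 * (B - b0 - h ^ 2 / 24 * b2)| ≤ |a2| * (C₂ * h ^ 4) := by
    calc |h ^ 2 / 24 * a2 * (B - b0 - h ^ 2 / 24 * b2)|
        = h ^ 2 / 24 * (|a2| * |B - b0 - h ^ 2 / 24 * b2|) := by
          rw [abs_mul, abs_mul, abs_of_nonneg (by positivity : (0:ℝ) ≤ h ^ 2 / 24)]; ring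
      _ ≤ 1 * (|a2| * |B - b0 - h ^ 2 / 24 * b2|) := by
          apply mul_le_mul_of_nonneg_right (by nlinarith) (by positivity)
      _ = |a2| * |B - b0 - h ^ 2 / 24 * b2| := one_mul _
      _ ≤ |a2| * (C₂ * h ^ 4) := mul_le_mul_of_nonneg_left heψ (abs_nonneg _)
  have hT4 : |(A - a0 - h ^ 2 / 24 * a2) * B| ≤ C₁ * h ^ 4 * (|b0| + |b2| / 24 + C₂) := by
    rw [abs_mul]
    exact mul_le_mul heφ tB (abs_nonneg _) (by positivity)
  have hT5 : |h ^ 4 / 576 * (a2 * b2)| ≤ |a2 * b2| * h ^ 4 := by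
    rw [abs_mul, abs_of_nonneg (by positivity : (0:ℝ) ≤ h ^ 4 / 576)]
    nlinarith [abs_nonneg (a2 * b2)]
  calc |(P - a0 * b0 - h ^ 2 / 24 * (a2 * b0 + 2 * (a1 * b1) + a0 * b2))
        - a0 * (B - b0 - h ^ 2 / 24 * b2)
        - h ^ 2 / 24 * a2 * (B - b0 - h ^ 2 / 24 * b2)
        - (A - a0 - h ^ 2 / 24 * a2) * B
        - h ^ 4 / 576 * (a2 * b2)|
      ≤ |(P - a0 * b0 - h ^ 2 / 24 * (a2 * b0 + 2 * (a1 * b1) + a0 * b2))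
        - a0 * (B - b0 - h ^ 2 / 24 * b2)
        - h ^ 2 / 24 * a2 * (B - b0 - h ^ 2 / 24 * b2)
        - (A - a0 - h ^ 2 / 24 * a2) * B| + |h ^ 4 / 576 * (a2 * b2)| := abs_sub _ _
    _ ≤ (|(P - a0 * b0 - h ^ 2 / 24 * (a2 * b0 + 2 * (a1 * b1) + a0 * b2))
        - a0 * (B - b0 - h ^ 2 / 24 * b2)
        - h ^ 2 / 24 * a2 * (B - b0 - h ^ 2 / 24 * b2)| + |(A - a0 - h ^ 2 / 24 * a2) * B|)
        + |h ^ 4 / 576 * (a2 * b2)| := add_le_add_left (abs_sub _ _) _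
    _ ≤ ((|(P - a0 * b0 - h ^ 2 / 24 * (a2 * b0 + 2 * (a1 * b1) + a0 * b2))
        - a0 * (B - b0 - h ^ 2 / 24 * b2)| + |h ^ 2 / 24 * a2 * (B - b0 - h ^ 2 / 24 * b2)|)
        + |(A - a0 - h ^ 2 / 24 * a2) * B|) + |h ^ 4 / 576 * (a2 * b2)| := by
          apply add_le_add_left (add_le_add_left (abs_sub _ _) _)
    _ ≤ (((|P - a0 * b0 - h ^ 2 / 24 * (a2 * b0 + 2 * (a1 * b1) + a0 * b2)|
        + |a0 * (B - b0 - h ^ 2 / 24 * b2)|) + |h ^ 2 / 24 * a2 * (B - b0 - h ^ 2 / 24 * b2)|)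
        + |(A - a0 - h ^ 2 / 24 * a2) * B|) + |h ^ 4 / 576 * (a2 * b2)| := by
          apply add_le_add_left (add_le_add_left (add_le_add_left (abs_sub _ _) _) _)
    _ ≤ (((C₃ * h ^ 4 + |a0| * (C₂ * h ^ 4)) + |a2| * (C₂ * h ^ 4))
        + C₁ * h ^ 4 * (|b0| + |b2| / 24 + C₂)) + |a2 * b2| * h ^ 4 := by
          exact add_le_add (add_le_add (add_le_add (add_le_add heπ hT2) hT3) hT4) hT5
    _ ≤ (C₃ + |a0| * C₂ + |a2| * C₂ + C₁ * (|b0| + |b2| / 24 + C₂) + |a2 * b2| + 1) * h ^ 4 := by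
          nlinarith
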